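/- arXiv:2505.19497 — 3 statements merged into one kernel-verified Lean document; each statement's English description precedes it below -/
import Mathlib

section
/- Let E be a finite-dimensional real inner product space, let K ⊆ E be a nonempty closed convex set with metric projection P_K : E → K, and let m be the dimension of the direction space of the affine span of K. If C ⊆ K is a Borel set with positive m-dimensional Hausdorff measure, then the preimage P_K⁻¹(C) = {z ∈ E : P_K(z) ∈ C} has positive Lebesgue (Haar) measure in E. -/
/-!
Let `V` be the direction of the affine span of `K`. For `c ∈ K`, `w ∈ Vᗮ` and `y ∈ K`,
Pythagoras gives `dist (c + w) y ^ 2 = dist c y ^ 2 + ‖w‖ ^ 2`, so `c` is the nearest point of `K`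
to `c + w` and the preimage of `C` contains `C + Vᗮ`. After translating `C` into `V`, the
splitting `V × Vᗮ ≃ E` carries `C × Vᗮ`, which has positive measure for the product of the
Hausdorff measures, onto `C + Vᗮ`; the image of that product measure is an additive Haar measure,
hence absolutely continuous with respect to Lebesgue measure.
-/

open MeasureTheory Set Pointwise

section NearestPoint

variable {E : Type*} [NormedAddCommGroup E] [InnerProductSpace ℝ E]

theorem dist_add_mem_orthogonal_sq {V : Submodule ℝ E} {c y w : E} (hcy : c - y ∈ V)
    (hw : w ∈ Vᗮ) : dist (c + w) y ^ 2 = dist c y ^ 2 + ‖w‖ ^ 2 := by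
  rw [dist_eq_norm, dist_eq_norm, add_sub_right_comm, norm_add_sq_real,
    Submodule.inner_right_of_mem_orthogonal hcy hw]
  ring

theorem nearestPoint_add_mem_orthogonal_direction {A : AffineSubspace ℝ E} {K : Set E}
    (hKA : K ⊆ A) {P : E → E} (hPmem : ∀ a, P a ∈ K)
    (hPnear : ∀ a, ∀ y ∈ K, dist a (P a) ≤ dist a y) {c w : E} (hc : c ∈ K)
    (hw : w ∈ A.directionᗮ) : P (c + w) = c := by
  have hcP : c - P (c + w) ∈ A.direction :=
    AffineSubspace.vsub_mem_direction (hKA hc) (hKA (hPmem _))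
  have hnear : dist (c + w) (P (c + w)) ≤ ‖w‖ := by
    simpa using hPnear (c + w) c hc
  have hsq := dist_add_mem_orthogonal_sq hcP hw
  have hdist : dist c (P (c + w)) ^ 2 ≤ 0 := by
    nlinarith [dist_nonneg (x := c + w) (y := P (c + w))]
  exact (dist_le_zero.mp (by nlinarith [dist_nonneg (x := c) (y := P (c + w))])).symm

end NearestPoint

section AddHaar

variable {E : Type*} [NormedAddCommGroup E] [InnerProductSpace ℝ E] [FiniteDimensional ℝ E]
  [MeasurableSpace E] [BorelSpace E] (μ : Measure E) [μ.IsAddHaarMeasure]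

theorem addHaar_add_orthogonal_pos_of_subset_submodule (V : Submodule ℝ E) {s : Set E}
    (hsV : s ⊆ V) (hs : 0 < μH[Module.finrank ℝ V] s) : 0 < μ (s + (Vᗮ : Set E)) := by
  obtain ⟨D, rfl⟩ : ∃ D : Set V, (↑) '' D = s :=
    ⟨(↑) ⁻¹' s, image_preimage_eq_of_subset (by simpa using hsV)⟩
  rw [isometry_subtype_coe.hausdorffMeasure_image (Or.inl (Nat.cast_nonneg _))] at hs
  let e := V.prodEquivOfIsCompl Vᗮ V.isCompl_orthogonal
  have himage : (↑) '' D + (Vᗮ : Set E) = e '' (D ×ˢ univ) := by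
    ext x
    simp [Set.mem_add, e]
  let ν : Measure (V × Vᗮ) := (μH[Module.finrank ℝ V]).prod μH[Module.finrank ℝ Vᗮ]
  have hν : 0 < ν (D ×ˢ univ) := by
    rw [Measure.prod_prod]
    exact ENNReal.mul_pos hs.ne' (Measure.measure_univ_pos.mpr (NeZero.ne _)).ne'
  have hmap : ν.map e (e '' (D ×ˢ univ)) = ν (D ×ˢ univ) :=
    (e.toContinuousLinearEquiv.toHomeomorph.toMeasurableEquiv.map_apply _).trans
      (congrArg ν (preimage_image_eq _ e.injective))
  have := Measure.MapLinearEquiv.isAddHaarMeasure ν e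
  rw [himage]
  exact (Measure.absolutelyContinuous_isAddHaarMeasure (ν.map e) μ).pos_mono (hmap ▸ hν)

theorem addHaar_add_orthogonal_pos_of_subset_affineSubspace (A : AffineSubspace ℝ E)
    {s : Set E} (hsA : s ⊆ A) (hs : 0 < μH[Module.finrank ℝ A.direction] s) :
    0 < μ (s + (A.directionᗮ : Set E)) := by
  obtain ⟨p, hp⟩ := nonempty_of_measure_ne_zero hs.ne'
  have hsub : -p +ᵥ s ⊆ A.direction := by
    rintro _ ⟨x, hx, rfl⟩
    simpa [neg_add_eq_sub] using AffineSubspace.vsub_mem_direction (hsA hx) (hsA hp)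
  have hμH : μH[Module.finrank ℝ A.direction] (-p +ᵥ s) =
      μH[Module.finrank ℝ A.direction] s := by
    rw [← image_vadd]
    exact (IsometryEquiv.constVAdd (X := E) (-p)).hausdorffMeasure_image _ s
  have := addHaar_add_orthogonal_pos_of_subset_submodule μ A.direction hsub (hμH ▸ hs)
  rwa [vadd_add_assoc, measure_vadd] at this

end AddHaar

theorem projection_preimage_pos_measure_general {E : Type*}
    [NormedAddCommGroup E] [InnerProductSpace ℝ E] [FiniteDimensional ℝ E]
    [MeasurableSpace E] [BorelSpace E]
    (K : Set E)
    (P : E → E) (hPmem : ∀ a, P a ∈ K)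
    (hPnear : ∀ a, ∀ y ∈ K, dist a (P a) ≤ dist a y)
    (C : Set E) (hCK : C ⊆ K)
    (hCpos : 0 < μH[(Module.finrank ℝ (affineSpan ℝ K).direction : ℝ)] C) :
    0 < (volume : Measure E) {z : E | P z ∈ C} := by
  have hKspan := subset_affineSpan ℝ K
  refine (addHaar_add_orthogonal_pos_of_subset_affineSubspace volume (affineSpan ℝ K)
    (hCK.trans hKspan) hCpos).trans_le (measure_mono ?_)
  rintro _ ⟨c, hc, w, hw, rfl⟩
  show P (c + w) ∈ C
  rwa [nearestPoint_add_mem_orthogonal_direction hKspan hPmem hPnear (hCK hc) hw]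

/-- Let `K` be a nonempty closed convex subset of a finite-dimensional real inner product
space `E`, with metric projection `P`, and let `m` be the dimension of the direction
space of the affine span of `K`. If `C ⊆ K` is a Borel set with positive `m`-dimensional
Hausdorff measure, then the preimage `{z | P z ∈ C}` has positive Lebesgue (Haar) measure
in `E`. -/
theorem projection_preimage_pos_measure {E : Type*}
    [NormedAddCommGroup E] [InnerProductSpace ℝ E] [FiniteDimensional ℝ E]
    [MeasurableSpace E] [BorelSpace E]
    (K : Set E) (hKne : K.Nonempty) (hKcl : IsClosed K) (hKco : Convex ℝ K)
    (P : E → E) (hPmem : ∀ a, P a ∈ K)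
    (hPnear : ∀ a, ∀ y ∈ K, dist a (P a) ≤ dist a y)
    (C : Set E) (hCK : C ⊆ K) (hCmeas : MeasurableSet C)
    (hCpos : 0 < μH[(Module.finrank ℝ (affineSpan ℝ K).direction : ℝ)] C) :
    0 < (volume : Measure E) {z : E | P z ∈ C} :=
  projection_preimage_pos_measure_general K P hPmem hPnear C hCK hCpos
end

section
/- Let G be a finite simple graph with vertex set V, let M be a real number with M > 1, and define H(x) = −∑_{i ∈ V} x i + M · ∑_{{i,j} ∈ E(G)} x i · x j for x : V → ℝ. If x takes values in {0, 1} and minimizes H among all {0,1}-valued assignments, then the set {i ∈ V : x i = 1} is an independent set of G (no two of its vertices are adjacent). -/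
/-!
Setting one endpoint `j` of an edge `ij` with `x i = x j = 1` to `0` lowers the vertex term by `1`,
while the penalty term can only decrease, by at least `M`, since every edge product is monotone
in nonnegative assignments and the product on `ij` drops from `1` to `0`. So for `M > 1` the
objective strictly decreases, and a minimizer cannot contain both endpoints of an edge.
-/

open Finset

/-- The MIS QUBO objective `H(x) = -∑_i x i + M ∑_{{i,j} ∈ E(G)} x i * x j`. -/
noncomputable def misObj {V : Type*} [Fintype V] (G : SimpleGraph V)
    [DecidableRel G.Adj] (M : ℝ) (x : V → ℝ) : ℝ :=
  -∑ i, x i + M * ∑ e ∈ G.edgeFinset,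
    Sym2.lift ⟨fun i j => x i * x j, fun i j => by ring⟩ e

namespace MisQubo

variable {V : Type*}

def edgeProd (x : V → ℝ) : Sym2 V → ℝ :=
  Sym2.lift ⟨fun i j => x i * x j, fun i j => by ring⟩

@[simp]
theorem edgeProd_mk (x : V → ℝ) (i j : V) : edgeProd x s(i, j) = x i * x j := rfl

theorem edgeProd_mono {x y : V → ℝ} (hy : 0 ≤ y) (hyx : y ≤ x) (e : Sym2 V) :
    edgeProd y e ≤ edgeProd x e := by
  induction e using Sym2.ind with
  | _ a b => exact mul_le_mul (hyx a) (hyx b) (hy b) ((hy a).trans (hyx a))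

theorem misObj_eq [Fintype V] (G : SimpleGraph V) [DecidableRel G.Adj] (M : ℝ) (x : V → ℝ) :
    misObj G M x = -∑ i, x i + M * ∑ e ∈ G.edgeFinset, edgeProd x e := rfl

variable [DecidableEq V]

theorem update_zero_le {x : V → ℝ} (hx : 0 ≤ x) (j : V) : Function.update x j 0 ≤ x := by
  intro k
  rcases eq_or_ne k j with rfl | hk
  · simpa using hx k
  · simp [hk]

theorem update_zero_nonneg {x : V → ℝ} (hx : 0 ≤ x) (j : V) : 0 ≤ Function.update x j 0 := by
  intro k
  rcases eq_or_ne k j with rfl | hk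
  · simp
  · simpa [hk] using hx k

theorem update_zero_isBinary {x : V → ℝ} (hx : ∀ k, x k = 0 ∨ x k = 1) (j k : V) :
    Function.update x j 0 k = 0 ∨ Function.update x j 0 k = 1 := by
  rcases eq_or_ne k j with rfl | hk
  · simp
  · simpa [hk] using hx k

theorem sum_update_zero [Fintype V] (x : V → ℝ) (j : V) :
    ∑ k, Function.update x j 0 k = ∑ k, x k - x j := by
  rw [sum_update_of_mem (mem_univ j), ← sum_erase_add _ _ (mem_univ j), ← sdiff_singleton_eq_erase]
  ring

theorem sum_edgeProd_update_zero_le [Fintype V] (G : SimpleGraph V) [DecidableRel G.Adj]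
    {x : V → ℝ} (hx : 0 ≤ x) {i j : V} (hij : G.Adj i j) :
    ∑ e ∈ G.edgeFinset, edgeProd (Function.update x j 0) e
      ≤ ∑ e ∈ G.edgeFinset, edgeProd x e - x i * x j := by
  have he : s(i, j) ∈ G.edgeFinset := G.mem_edgeFinset.mpr hij
  calc ∑ e ∈ G.edgeFinset, edgeProd (Function.update x j 0) e
      = edgeProd (Function.update x j 0) s(i, j)
          + ∑ e ∈ G.edgeFinset.erase s(i, j), edgeProd (Function.update x j 0) e :=
        (add_sum_erase _ _ he).symm
    _ ≤ 0 + ∑ e ∈ G.edgeFinset.erase s(i, j), edgeProd x e := by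
        gcongr with e
        · simp
        · exact edgeProd_mono (update_zero_nonneg hx j) (update_zero_le hx j) e
    _ = ∑ e ∈ G.edgeFinset, edgeProd x e - x i * x j := by
        rw [← add_sum_erase _ _ he, edgeProd_mk]
        ring

theorem misObj_update_zero_le [Fintype V] (G : SimpleGraph V) [DecidableRel G.Adj] {M : ℝ}
    (hM : 0 ≤ M) {x : V → ℝ} (hx : 0 ≤ x) {i j : V} (hij : G.Adj i j) :
    misObj G M (Function.update x j 0) ≤ misObj G M x + x j - M * (x i * x j) := by
  rw [misObj_eq, misObj_eq, sum_update_zero]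
  nlinarith [mul_le_mul_of_nonneg_left (sum_edgeProd_update_zero_le G hx hij) hM]

end MisQubo

/-- If `M > 1` and a `{0,1}`-valued `x` minimizes the MIS QUBO objective among all
`{0,1}`-valued assignments, then `{i | x i = 1}` is an independent set of `G`: no two of
its vertices are adjacent. -/
theorem mis_qubo_minimizer_is_independent {V : Type*} [Fintype V] (G : SimpleGraph V)
    [DecidableRel G.Adj] (M : ℝ) (hM : 1 < M) (x : V → ℝ)
    (hx : ∀ i, x i = 0 ∨ x i = 1)
    (hmin : ∀ y : V → ℝ, (∀ i, y i = 0 ∨ y i = 1) → misObj G M x ≤ misObj G M y) :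
    {i | x i = 1}.Pairwise fun i j => ¬G.Adj i j := by
  classical
  intro i hi j hj _ hij
  replace hi : x i = 1 := hi
  replace hj : x j = 1 := hj
  have hx_nonneg : 0 ≤ x := fun k => by rcases hx k with h | h <;> simp [h]
  have hdrop := MisQubo.misObj_update_zero_le G (zero_lt_one.trans hM).le hx_nonneg hij
  have hmin_drop := hmin _ (MisQubo.update_zero_isBinary hx j)
  rw [hi, hj] at hdrop
  linarith
end

section
/- Let G be a finite simple graph with vertex set V, let M be a real number with M > 1, and define H(x) = −∑_{i ∈ V} x i + M · ∑_{{i,j} ∈ E(G)} x i · x j for x : V → ℝ. Then the minimum of H over all x : V → {0, 1} equals −α(G), the negative of the independence number of G; moreover, for every minimizer x, the set {i ∈ V : x i = 1} is an independent set of G of maximum cardinality α(G). -/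
/-!
For a `{0,1}`-vector with support `S`, `H = -#S + M e(S)`, where `e(S)` counts the edges
inside `S`. Deleting one endpoint of each such edge leaves an independent set, so
`#S ≤ α + e(S)` and `H ≥ -α + (M - 1) e(S) ≥ -α`. Since `M > 1`, equality forces `e(S) = 0`,
i.e. `S` is independent of size `α`; conversely a maximum independent set attains `-α`.
-/

open Finset

namespace SimpleGraph

variable {V : Type*} (G : SimpleGraph V) [Fintype G.edgeSet]

theorem isIndepSet_iff_disjoint_edgeFinset_sym2 {S : Finset V} :
    G.IsIndepSet ↑S ↔ Disjoint G.edgeFinset S.sym2 := by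
  simp only [isIndepSet_iff, Set.Pairwise, Finset.disjoint_left, Sym2.forall, mem_edgeFinset,
    mem_edgeSet, Finset.mk_mem_sym2_iff, Finset.mem_coe]
  exact ⟨fun h i j hij ⟨hi, hj⟩ => h hi hj hij.ne hij, fun h i hi j hj _ hij => h i j hij ⟨hi, hj⟩⟩

theorem exists_isIndepSet_subset_card_le_add [DecidableEq V] (S : Finset V) :
    ∃ T ⊆ S, G.IsIndepSet ↑T ∧ #S ≤ #T + #(G.edgeFinset ∩ S.sym2) := by
  induction S using Finset.strongInduction with
  | H S ih =>
    by_cases hS : G.IsIndepSet ↑S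
    · exact ⟨S, subset_rfl, hS, le_self_add⟩
    obtain ⟨e, heG, heS⟩ := Finset.not_disjoint_iff.mp
      (mt (G.isIndepSet_iff_disjoint_edgeFinset_sym2).mpr hS)
    induction e using Sym2.ind with
    | h i j =>
    have hi : i ∈ S := (Finset.mk_mem_sym2_iff.mp heS).1
    obtain ⟨T, hTS, hT, hcard⟩ := ih (S.erase i) (Finset.erase_ssubset hi)
    have hedges : G.edgeFinset ∩ (S.erase i).sym2 ⊂ G.edgeFinset ∩ S.sym2 := by
      refine Finset.ssubset_iff_of_subset (Finset.inter_subset_inter_left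
        (Finset.sym2_mono (Finset.erase_subset i S))) |>.mpr ⟨s(i, j), ?_, ?_⟩
      · exact Finset.mem_inter.mpr ⟨heG, heS⟩
      · simp
    refine ⟨T, hTS.trans (Finset.erase_subset i S), hT, ?_⟩
    have := Finset.card_lt_card hedges
    have := Finset.card_erase_add_one hi
    omega

end SimpleGraph

theorem exists_eq_indicator_of_forall_eq_zero_or_eq_one {V : Type*} [Fintype V] {x : V → ℝ}
    (hx : ∀ i, x i = 0 ∨ x i = 1) : ∃ S : Finset V, x = (S : Set V).indicator 1 := by
  refine ⟨({i | x i = 1} : Finset V), funext fun i => ?_⟩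
  rcases hx i with h | h <;> simp [h]

section QUBO

variable {V : Type*} [Fintype V] [DecidableEq V] (G : SimpleGraph V) [DecidableRel G.Adj]

theorem misObj_indicator (M : ℝ) (S : Finset V) :
    misObj G M ((S : Set V).indicator 1) = -#S + M * #(G.edgeFinset ∩ S.sym2) := by
  have hedge (e : Sym2 V) : Sym2.lift ⟨fun i j => (S : Set V).indicator (1 : V → ℝ) i *
      (S : Set V).indicator 1 j, fun i j => by ring⟩ e = if e ∈ S.sym2 then 1 else 0 := by
    induction e using Sym2.ind with
    | h i j => by_cases hi : i ∈ S <;> by_cases hj : j ∈ S <;> simp [hi, hj]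
  rw [misObj, Finset.sum_congr rfl fun e _ => hedge e, Finset.sum_boole,
    Finset.filter_mem_eq_inter]
  simp [Set.indicator_apply]

theorem neg_add_mul_card_le_misObj_indicator (M : ℝ) {α : ℕ}
    (hα : ∀ T : Finset V, G.IsIndepSet ↑T → #T ≤ α) (S : Finset V) :
    -α + (M - 1) * #(G.edgeFinset ∩ S.sym2) ≤ misObj G M ((S : Set V).indicator 1) := by
  obtain ⟨T, -, hT, hcard⟩ := G.exists_isIndepSet_subset_card_le_add S
  have : (#S : ℝ) ≤ α + #(G.edgeFinset ∩ S.sym2) := by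
    exact_mod_cast hcard.trans (Nat.add_le_add_right (hα T hT) _)
  rw [misObj_indicator]
  linarith

theorem neg_le_misObj_indicator {M : ℝ} (hM : 1 ≤ M) {α : ℕ}
    (hα : ∀ T : Finset V, G.IsIndepSet ↑T → #T ≤ α) (S : Finset V) :
    -(α : ℝ) ≤ misObj G M ((S : Set V).indicator 1) := by
  have := neg_add_mul_card_le_misObj_indicator G M hα S
  have : 0 ≤ (M - 1) * #(G.edgeFinset ∩ S.sym2) := by positivity
  linarith

theorem misObj_indicator_eq_neg_iff {M : ℝ} (hM : 1 < M) {α : ℕ}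
    (hα : ∀ T : Finset V, G.IsIndepSet ↑T → #T ≤ α) (S : Finset V) :
    misObj G M ((S : Set V).indicator 1) = -α ↔ G.IsIndepSet ↑S ∧ #S = α := by
  rw [G.isIndepSet_iff_disjoint_edgeFinset_sym2, Finset.disjoint_iff_inter_eq_empty]
  constructor
  · intro h
    have hle := neg_add_mul_card_le_misObj_indicator G M hα S
    have hE : G.edgeFinset ∩ S.sym2 = ∅ := by
      rw [← Finset.card_eq_zero, ← Nat.cast_eq_zero (R := ℝ)]
      nlinarith
    rw [misObj_indicator, hE] at h
    exact ⟨hE, by simpa using h⟩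
  · rintro ⟨hE, rfl⟩
    simp [misObj_indicator, hE]

end QUBO

/-- Let `M > 1` and let `α` be the independence number of `G` (the greatest cardinality of
an independent set). Then the minimum of the MIS QUBO objective over `{0,1}`-valued
assignments equals `-α`, and every `{0,1}`-valued minimizer `x` has `{i | x i = 1}` an
independent set of maximum cardinality `α`. -/
theorem mis_qubo_min_eq_neg_indepNum {V : Type*} [Fintype V] (G : SimpleGraph V)
    [DecidableRel G.Adj] (M : ℝ) (hM : 1 < M) (α : ℕ)
    (hα : IsGreatest
      {k : ℕ | ∃ s : Set V, (s.Pairwise fun i j => ¬G.Adj i j) ∧ s.ncard = k} α) :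
    IsLeast {r : ℝ | ∃ x : V → ℝ, (∀ i, x i = 0 ∨ x i = 1) ∧ r = misObj G M x}
        (-(α : ℝ)) ∧
      ∀ x : V → ℝ, (∀ i, x i = 0 ∨ x i = 1) →
        (∀ y : V → ℝ, (∀ i, y i = 0 ∨ y i = 1) → misObj G M x ≤ misObj G M y) →
        ({i | x i = 1}.Pairwise fun i j => ¬G.Adj i j) ∧ {i | x i = 1}.ncard = α := by
  classical
  have hindep_card_le (T : Finset V) (hT : G.IsIndepSet ↑T) : #T ≤ α := by
    simpa using hα.2 ⟨T, hT, rfl⟩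
  obtain ⟨s₀, hs₀, hs₀card⟩ := hα.1
  set x₀ : V → ℝ := (s₀.toFinset : Set V).indicator 1
  have hx₀ : ∀ i, x₀ i = 0 ∨ x₀ i = 1 := fun i => by
    by_cases hi : i ∈ s₀ <;> simp [x₀, hi]
  have hx₀min : misObj G M x₀ = -α :=
    (misObj_indicator_eq_neg_iff G hM hindep_card_le _).mpr
      ⟨by simpa using hs₀, by rw [← hs₀card, Set.ncard_eq_toFinset_card']⟩
  refine ⟨⟨⟨x₀, hx₀, hx₀min.symm⟩, ?_⟩, fun x hx hxmin => ?_⟩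
  · rintro r ⟨x, hx, rfl⟩
    obtain ⟨S, rfl⟩ := exists_eq_indicator_of_forall_eq_zero_or_eq_one hx
    exact neg_le_misObj_indicator G hM.le hindep_card_le S
  · obtain ⟨S, rfl⟩ := exists_eq_indicator_of_forall_eq_zero_or_eq_one hx
    have := (misObj_indicator_eq_neg_iff G hM hindep_card_le S).mp
      (le_antisymm (hx₀min ▸ hxmin x₀ hx₀) (neg_le_misObj_indicator G hM.le hindep_card_le S))
    simpa [Set.indicator_eq_one_iff_mem] using this
end
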